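/- arXiv:1505.01175 — 2 statements merged into one kernel-verified Lean document; each statement's English description precedes it below -/
import Mathlib

section
/- Let G be a finitely generated group with finite symmetric generating set S and word metric |·|. If f : G → ℂ is a polynomial of degree at most n (all (n+1)-fold left derivatives vanish), then there exists C > 0 such that |f(x)| ≤ C(1 + |x|)ⁿ for all x ∈ G. -/
/-- Left derivative: `∂_u f (g) = f (u g) - f g`. -/
def lderiv {G : Type*} [Group G] (u : G) (f : G → ℂ) : G → ℂ := fun g => f (u * g) - f g

/-- `f ∈ P^n(G)`: all `(n+1)`-fold left derivatives of `f` vanish identically. -/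
def IsPolyOfDeg {G : Type*} [Group G] (n : ℕ) (f : G → ℂ) : Prop :=
  ∀ us : List G, us.length = n + 1 → us.foldr lderiv f = 0

/-- Word length of `x` with respect to a generating set `S`. -/
noncomputable def wlen {G : Type*} [Group G] (S : Set G) (x : G) : ℕ :=
  sInf {n : ℕ | ∃ l : List G, l.length = n ∧ (∀ s ∈ l, s ∈ S) ∧ l.prod = x}

/-- A polynomial of degree at most `n` on a finitely generated group has polynomial growth
of degree at most `n`: `|f x| ≤ C (1 + |x|)^n`. -/
theorem poly_growth {G : Type*} [Group G] (S : Finset G)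
    (hsym : ∀ s ∈ S, s⁻¹ ∈ S) (hgen : Subgroup.closure (S : Set G) = ⊤)
    (n : ℕ) (f : G → ℂ) (hf : IsPolyOfDeg n f) :
    ∃ C : ℝ, 0 < C ∧ ∀ x : G, ‖f x‖ ≤ C * (1 + (wlen (S : Set G) x : ℝ)) ^ n := by
  induction n generalizing f with
  | zero =>
    refine ⟨‖f 1‖ + 1, by positivity, fun x => ?_⟩
    have h : f x = f 1 := by
      have := congrFun (hf [x] rfl) 1
      simp [lderiv, sub_eq_zero] at this
      simpa using this
    rw [h]
    simp
  | succ n IH =>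
    have hder : ∀ s : G, IsPolyOfDeg n (lderiv s f) := by
      intro s us hus
      have h := hf (us ++ [s]) (by simp [hus])
      simpa [List.foldr_append] using h
    choose C hCpos hC using fun s => IH _ (hder s)
    have hsum : 0 ≤ ∑ s ∈ S, C s := Finset.sum_nonneg fun s _ => (hCpos s).le
    set D : ℝ := 1 + ∑ s ∈ S, C s with hD
    have hDpos : 0 < D := by dsimp [D]; linarith
    have hCD : ∀ s ∈ S, C s ≤ D := fun s hs => by
      have := Finset.single_le_sum (f := C) (fun i _ => (hCpos i).le) hs
      dsimp [D]; linarith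
    have key : ∀ l : List G, (∀ s ∈ l, s ∈ S) →
        ‖f l.prod‖ ≤ ‖f 1‖ + l.length * D * (1 + (l.length : ℝ)) ^ n := by
      intro l
      induction l with
      | nil => intro _; simp
      | cons s t ih =>
        intro hmem
        have hs : s ∈ S := hmem s (by simp)
        have ht : ∀ a ∈ t, a ∈ S := fun a ha => hmem a (by simp [ha])
        have h1 : f ((s :: t).prod) = lderiv s f t.prod + f t.prod := by
          simp [lderiv]
        have h2 : ‖f ((s :: t).prod)‖ ≤ ‖lderiv s f t.prod‖ + ‖f t.prod‖ := by
          rw [h1]; exact norm_add_le _ _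
        have h3 : ‖lderiv s f t.prod‖ ≤
            C s * (1 + (wlen (S : Set G) t.prod : ℝ)) ^ n := hC s t.prod
        have h4 : (wlen (S : Set G) t.prod : ℝ) ≤ (t.length : ℝ) := by
          have : wlen (S : Set G) t.prod ≤ t.length :=
            Nat.sInf_le (Set.mem_setOf.mpr ⟨t, rfl, ht, rfl⟩)
          exact_mod_cast this
        have hw0 : (0 : ℝ) ≤ (wlen (S : Set G) t.prod : ℝ) := Nat.cast_nonneg _
        have h5 : (1 + (wlen (S : Set G) t.prod : ℝ)) ^ n ≤
            (1 + ((t.length : ℝ) + 1)) ^ n := by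
          apply pow_le_pow_left₀ (by linarith)
          linarith
        have h6 : (1 + (t.length : ℝ)) ^ n ≤ (1 + ((t.length : ℝ) + 1)) ^ n := by
          apply pow_le_pow_left₀ (by positivity)
          linarith
        have h7 := ih ht
        have hCsD : C s ≤ D := hCD s hs
        have hpn : (0 : ℝ) ≤ (1 + (wlen (S : Set G) t.prod : ℝ)) ^ n := by positivity
        have hpn2 : (0 : ℝ) ≤ (1 + (t.length : ℝ)) ^ n := by positivity
        have hcs : C s * (1 + (wlen (S : Set G) t.prod : ℝ)) ^ n ≤
            D * (1 + ((t.length : ℝ) + 1)) ^ n := by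
          calc C s * (1 + (wlen (S : Set G) t.prod : ℝ)) ^ n
              ≤ D * (1 + (wlen (S : Set G) t.prod : ℝ)) ^ n := by
                exact mul_le_mul_of_nonneg_right hCsD hpn
            _ ≤ D * (1 + ((t.length : ℝ) + 1)) ^ n :=
                mul_le_mul_of_nonneg_left h5 hDpos.le
        have htl : (t.length : ℝ) * D * (1 + (t.length : ℝ)) ^ n ≤
            (t.length : ℝ) * D * (1 + ((t.length : ℝ) + 1)) ^ n := by
          apply mul_le_mul_of_nonneg_left h6
          positivity
        have hlen : ((s :: t).length : ℝ) = (t.length : ℝ) + 1 := by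
          push_cast [List.length_cons]; ring
        rw [hlen]
        calc ‖f ((s :: t).prod)‖ ≤ ‖lderiv s f t.prod‖ + ‖f t.prod‖ := h2
          _ ≤ C s * (1 + (wlen (S : Set G) t.prod : ℝ)) ^ n +
              (‖f 1‖ + t.length * D * (1 + (t.length : ℝ)) ^ n) := add_le_add h3 h7
          _ ≤ D * (1 + ((t.length : ℝ) + 1)) ^ n +
              (‖f 1‖ + t.length * D * (1 + ((t.length : ℝ) + 1)) ^ n) := by
                linarith
          _ = ‖f 1‖ + ((t.length : ℝ) + 1) * D * (1 + ((t.length : ℝ) + 1)) ^ n := by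
                ring
    refine ⟨‖f 1‖ + D, by positivity, fun x => ?_⟩
    have hx : x ∈ Subgroup.closure (S : Set G) := hgen ▸ Subgroup.mem_top x
    have hx' : x ∈ Submonoid.closure (S : Set G) := by
      have h := Subgroup.closure_toSubmonoid (S : Set G)
      have : x ∈ (Subgroup.closure (S : Set G)).toSubmonoid := hx
      rw [h] at this
      have hU : (S : Set G) ∪ (S : Set G)⁻¹ = (S : Set G) := by
        apply Set.union_eq_self_of_subset_right
        intro a ha
        have : a⁻¹ ∈ S := ha
        simpa using hsym _ this
      rwa [hU] at this
    obtain ⟨l0, hl0, hprod0⟩ := Submonoid.exists_list_of_mem_closure hx'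
    have hne : {m : ℕ | ∃ l : List G, l.length = m ∧ (∀ s ∈ l, s ∈ (S : Set G)) ∧
        l.prod = x}.Nonempty := ⟨l0.length, l0, rfl, hl0, hprod0⟩
    obtain ⟨l, hlen, hmem, hprod⟩ := Nat.sInf_mem hne
    have hlen' : l.length = wlen (S : Set G) x := hlen
    have hkey := key l (fun s hs => hmem s hs)
    rw [hprod, hlen'] at hkey
    set k : ℝ := (wlen (S : Set G) x : ℝ) with hk
    have hk0 : 0 ≤ k := Nat.cast_nonneg _
    have hpow1 : (1 : ℝ) ≤ (1 + k) ^ (n + 1) := one_le_pow₀ (by linarith)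
    have hpowk : k * (1 + k) ^ n ≤ (1 + k) ^ (n + 1) := by
      rw [pow_succ]
      have : (0 : ℝ) ≤ (1 + k) ^ n := by positivity
      nlinarith
    have hf1 : 0 ≤ ‖f 1‖ := norm_nonneg _
    calc ‖f x‖ ≤ ‖f 1‖ + k * D * (1 + k) ^ n := hkey
      _ ≤ (‖f 1‖ + D) * (1 + k) ^ (n + 1) := by nlinarith
end

section
/- Let G be a finitely generated group with finite symmetric generating set S and word length |·|, and let f : G → ℂ be a polynomial (all sufficiently high left derivatives vanish). If max_{|x| ≤ r} |f(x)| = o(r^{k+1}) as r → ∞, then f has degree at most k, i.e., all (k+1)-fold left derivatives of f vanish. -/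
open Finset Function Polynomial
open scoped fwdDiff

namespace PolyGrowthAux

lemma fwdDiff_iter_zero_fun {M G : Type*} [AddCommMonoid M] [AddCommGroup G] (h : M) (j : ℕ) :
    (fwdDiff h)^[j] (0 : M → G) = 0 := by
  induction j with
  | zero => rfl
  | succ j ih => rw [Function.iterate_succ_apply, show fwdDiff h (0 : M → G) = 0 by
      funext x; simp [fwdDiff], ih]

lemma fwdDiff_iter_eq_zero_of_le {p : ℕ → ℂ} {m j : ℕ} (hp : (fwdDiff 1)^[m + 1] p = 0)
    (hj : m + 1 ≤ j) : (fwdDiff 1)^[j] p = 0 := by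
  obtain ⟨i, rfl⟩ := Nat.exists_eq_add_of_le hj
  rw [add_comm, Function.iterate_add_apply, hp, fwdDiff_iter_zero_fun]

lemma newton {m : ℕ} {p : ℕ → ℂ} (hp : (fwdDiff 1)^[m + 1] p = 0) (n : ℕ) :
    p n = ∑ k ∈ range (m + 1), (n.choose k : ℂ) * (fwdDiff 1)^[k] p 0 := by
  have h0 := shift_eq_sum_fwdDiff_iter (1 : ℕ) p n 0
  simp only [smul_eq_mul, mul_one, zero_add, nsmul_eq_mul] at h0
  set N := max m n with hN
  have e1 : ∑ k ∈ range (n + 1), (n.choose k : ℂ) * (fwdDiff 1)^[k] p 0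
      = ∑ k ∈ range (N + 1), (n.choose k : ℂ) * (fwdDiff 1)^[k] p 0 := by
    refine Finset.sum_subset (Finset.range_subset_range.2 (by omega)) ?_
    intro k _ hk'
    simp only [Finset.mem_range] at hk'
    have : n.choose k = 0 := Nat.choose_eq_zero_of_lt (by omega)
    simp [this]
  have e2 : ∑ k ∈ range (m + 1), (n.choose k : ℂ) * (fwdDiff 1)^[k] p 0
      = ∑ k ∈ range (N + 1), (n.choose k : ℂ) * (fwdDiff 1)^[k] p 0 := by
    refine Finset.sum_subset (Finset.range_subset_range.2 (by omega)) ?_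
    intro k _ hk'
    simp only [Finset.mem_range] at hk'
    rw [fwdDiff_iter_eq_zero_of_le hp (by omega)]
    simp
  rw [e2, ← e1, h0]

lemma exists_poly {m : ℕ} {p : ℕ → ℂ} (hp : (fwdDiff 1)^[m + 1] p = 0) :
    ∃ P : ℂ[X], P.degree < (m + 1 : ℕ) ∧ ∀ n : ℕ, p n = P.eval (n : ℂ) := by
  refine ⟨∑ k ∈ range (m + 1), C ((fwdDiff 1)^[k] p 0 / (k.factorial : ℂ)) * descPochhammer ℂ k,
    ?_, ?_⟩
  · refine lt_of_le_of_lt (degree_sum_le _ _) ?_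
    rw [Finset.sup_lt_iff (by exact_mod_cast WithBot.bot_lt_coe (m+1))]
    intro k hk
    refine lt_of_le_of_lt (degree_mul_le _ _) ?_
    refine lt_of_le_of_lt (add_le_add degree_C_le degree_le_natDegree) ?_
    rw [descPochhammer_natDegree]
    simp only [Finset.mem_range] at hk
    rw [zero_add]
    exact_mod_cast Nat.cast_lt.mpr hk
  · intro n
    rw [newton hp n, eval_finset_sum]
    refine Finset.sum_congr rfl fun k _ => ?_
    rw [eval_mul, eval_C, descPochhammer_eval_eq_descFactorial,
      Nat.descFactorial_eq_factorial_mul_choose]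
    push_cast
    rw [div_mul_eq_mul_div, mul_comm ((k.factorial : ℂ)) _, ← mul_assoc, mul_div_assoc,
      div_self (by exact_mod_cast Nat.factorial_ne_zero k), mul_one, mul_comm]

end PolyGrowthAux
section Part2
open Finset Function Polynomial
namespace PolyGrowthAux

lemma prod_sub_prod_norm_le {ι : Type*} [DecidableEq ι] (s : Finset ι) (a b : ι → ℂ)
    (M δ : ℝ) (hδ : 0 ≤ δ) (ha : ∀ i ∈ s, ‖a i‖ ≤ M) (hb : ∀ i ∈ s, ‖b i‖ ≤ M)
    (hab : ∀ i ∈ s, ‖a i - b i‖ ≤ δ) :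
    ‖∏ i ∈ s, a i - ∏ i ∈ s, b i‖ ≤ s.card * δ * M ^ (s.card - 1) := by
  classical
  induction s using Finset.induction_on with
  | empty => simp
  | @insert i s hi ih =>
    have hM : 0 ≤ M := le_trans (norm_nonneg _) (ha i (mem_insert_self _ _))
    have ha' : ∀ j ∈ s, ‖a j‖ ≤ M := fun j hj => ha j (mem_insert_of_mem hj)
    have hb' : ∀ j ∈ s, ‖b j‖ ≤ M := fun j hj => hb j (mem_insert_of_mem hj)
    have hab' : ∀ j ∈ s, ‖a j - b j‖ ≤ δ := fun j hj => hab j (mem_insert_of_mem hj)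
    have IH := ih ha' hb' hab'
    rw [Finset.prod_insert hi, Finset.prod_insert hi, Finset.card_insert_of_notMem hi]
    have key : a i * ∏ j ∈ s, a j - b i * ∏ j ∈ s, b j
        = a i * (∏ j ∈ s, a j - ∏ j ∈ s, b j) + (a i - b i) * ∏ j ∈ s, b j := by ring
    rw [key]
    refine le_trans (norm_add_le _ _) ?_
    rw [norm_mul, norm_mul]
    have hbprod : ‖∏ j ∈ s, b j‖ ≤ M ^ s.card := by
      rw [norm_prod]
      calc ∏ j ∈ s, ‖b j‖ ≤ ∏ j ∈ s, M :=
            Finset.prod_le_prod (fun j _ => norm_nonneg _) hb'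
        _ = M ^ s.card := by rw [Finset.prod_const]
    have h1 : ‖a i‖ * ‖∏ j ∈ s, a j - ∏ j ∈ s, b j‖ ≤ (s.card : ℝ) * δ * M ^ s.card := by
      rcases Nat.eq_zero_or_pos s.card with h | h
      · have : (∏ j ∈ s, a j - ∏ j ∈ s, b j) = 0 := by
          rw [Finset.card_eq_zero] at h; subst h; simp
        rw [this, norm_zero, mul_zero]
        positivity
      · calc ‖a i‖ * ‖∏ j ∈ s, a j - ∏ j ∈ s, b j‖
            ≤ M * ((s.card : ℝ) * δ * M ^ (s.card - 1)) := by
              apply mul_le_mul (ha i (mem_insert_self _ _)) IH (norm_nonneg _) hM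
          _ = (s.card : ℝ) * δ * (M ^ (s.card - 1) * M) := by ring
          _ = (s.card : ℝ) * δ * M ^ s.card := by
              rw [← pow_succ, Nat.sub_add_cancel h]
    have h2 : ‖a i - b i‖ * ‖∏ j ∈ s, b j‖ ≤ δ * M ^ s.card :=
      mul_le_mul (hab i (mem_insert_self _ _)) hbprod (norm_nonneg _) hδ
    calc ‖a i‖ * ‖∏ j ∈ s, a j - ∏ j ∈ s, b j‖ + ‖a i - b i‖ * ‖∏ j ∈ s, b j‖
        ≤ (s.card : ℝ) * δ * M ^ s.card + δ * M ^ s.card := add_le_add h1 h2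
      _ = ((s.card : ℝ) + 1) * δ * M ^ s.card := by ring
      _ = (↑(s.card + 1) : ℝ) * δ * M ^ (s.card + 1 - 1) := by push_cast; simp

end PolyGrowthAux
end Part2
section Part3
open Finset Function Polynomial
namespace PolyGrowthAux

lemma node_sep {t : ℕ} (ht : 1 ≤ t) {i j : ℕ} (hij : i ≠ j) :
    (t : ℝ) ≤ ‖((t * i : ℕ) : ℂ) - ((t * j : ℕ) : ℂ)‖ := by
  have : ((t * i : ℕ) : ℂ) - ((t * j : ℕ) : ℂ)
      = ((((t * i : ℕ) : ℝ) - ((t * j : ℕ) : ℝ) : ℝ) : ℂ) := by push_cast; ring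
  rw [this, Complex.norm_real, Real.norm_eq_abs]
  rcases Nat.lt_or_ge i j with h | h
  · have h2 : t * i + t ≤ t * j := by
      calc t * i + t = t * (i + 1) := by ring
        _ ≤ t * j := Nat.mul_le_mul_left t h
    have h2' : ((t * i : ℕ) : ℝ) + t ≤ ((t * j : ℕ) : ℝ) := by exact_mod_cast h2
    rw [abs_sub_comm, abs_of_nonneg (by linarith)]
    linarith
  · have h' : j < i := lt_of_le_of_ne h hij.symm
    have h2 : t * j + t ≤ t * i := by
      calc t * j + t = t * (j + 1) := by ring
        _ ≤ t * i := Nat.mul_le_mul_left t h'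
    have h2' : ((t * j : ℕ) : ℝ) + t ≤ ((t * i : ℕ) : ℝ) := by exact_mod_cast h2
    rw [abs_of_nonneg (by linarith)]
    linarith

lemma basis_diff_bound {m t : ℕ} (ht : 1 ≤ t) {i : ℕ} (hi : i ∈ range (m + 1)) :
    ‖eval 1 (Lagrange.basis (range (m + 1)) (fun j => ((t * j : ℕ) : ℂ)) i)
      - eval 0 (Lagrange.basis (range (m + 1)) (fun j => ((t * j : ℕ) : ℂ)) i)‖
      ≤ (m : ℝ) * ((m : ℝ) + 1) ^ m / t := by
  have ht0 : (0 : ℝ) < t := by exact_mod_cast ht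
  set v : ℕ → ℂ := fun j => ((t * j : ℕ) : ℂ) with hv
  set s : Finset ℕ := (range (m + 1)).erase i with hs
  have hcard : s.card = m := by rw [hs, card_erase_of_mem hi, card_range]; omega
  -- eval of basis as a product
  have heval : ∀ z : ℂ, eval z (Lagrange.basis (range (m + 1)) v i)
      = (∏ j ∈ s, (v i - v j)⁻¹) * ∏ j ∈ s, (z - v j) := by
    intro z
    rw [Lagrange.basis, eval_prod, ← Finset.prod_mul_distrib]
    refine Finset.prod_congr rfl fun j _ => ?_
    rw [Lagrange.basisDivisor]
    simp [mul_comm]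
  have hsep : ∀ j ∈ s, (t : ℝ) ≤ ‖v i - v j‖ := by
    intro j hj
    exact node_sep ht (Finset.mem_erase.mp hj).1.symm
  -- bound on the product of inverses
  have hinv : ‖∏ j ∈ s, (v i - v j)⁻¹‖ ≤ ((t : ℝ)⁻¹) ^ m := by
    rw [norm_prod, ← hcard, ← Finset.prod_const]
    refine Finset.prod_le_prod (fun j _ => norm_nonneg _) fun j hj => ?_
    rw [norm_inv]
    exact inv_anti₀ ht0 (hsep j hj)
  -- bound on the product difference
  have hnum : ‖(∏ j ∈ s, ((1 : ℂ) - v j)) - ∏ j ∈ s, ((0 : ℂ) - v j)‖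
      ≤ (m : ℝ) * 1 * ((t : ℝ) * ((m : ℝ) + 1)) ^ (m - 1) := by
    have := prod_sub_prod_norm_le s (fun j => (1 : ℂ) - v j) (fun j => (0 : ℂ) - v j)
      ((t : ℝ) * ((m : ℝ) + 1)) 1 zero_le_one ?_ ?_ ?_
    · rw [hcard] at this; exact this
    · intro j hj
      have hjm : j ≤ m := by
        have := (Finset.mem_erase.mp hj).2
        simpa [Nat.lt_succ_iff] using this
      have : ‖v j‖ = ((t * j : ℕ) : ℝ) := by rw [hv]; exact Complex.norm_natCast _
      calc ‖(1 : ℂ) - v j‖ ≤ ‖(1 : ℂ)‖ + ‖v j‖ := norm_sub_le _ _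
        _ = 1 + ((t * j : ℕ) : ℝ) := by rw [norm_one, this]
        _ ≤ (t : ℝ) + (t : ℝ) * m := by
            push_cast
            have h1 : (1 : ℝ) ≤ t := by exact_mod_cast ht
            have h2 : (t : ℝ) * j ≤ (t : ℝ) * m := by
              apply mul_le_mul_of_nonneg_left _ (le_of_lt ht0)
              exact_mod_cast hjm
            linarith
        _ = (t : ℝ) * ((m : ℝ) + 1) := by ring
    · intro j hj
      have hjm : j ≤ m := by
        have := (Finset.mem_erase.mp hj).2
        simpa [Nat.lt_succ_iff] using this
      have hn : ‖v j‖ = ((t * j : ℕ) : ℝ) := by rw [hv]; exact Complex.norm_natCast _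
      calc ‖(0 : ℂ) - v j‖ = ‖v j‖ := by rw [zero_sub, norm_neg]
        _ = ((t * j : ℕ) : ℝ) := hn
        _ ≤ (t : ℝ) * ((m : ℝ) + 1) := by
            push_cast
            have h2 : (t : ℝ) * j ≤ (t : ℝ) * m := by
              apply mul_le_mul_of_nonneg_left _ (le_of_lt ht0)
              exact_mod_cast hjm
            linarith
    · intro j _
      simp
  rw [heval 1, heval 0, ← mul_sub, norm_mul]
  rcases Nat.eq_zero_or_pos m with hm | hm
  · subst hm
    have : s = ∅ := by
      rw [Finset.card_eq_zero] at hcard; exact hcard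
    simp [this]
  -- m ≥ 1
  calc ‖∏ j ∈ s, (v i - v j)⁻¹‖ * ‖(∏ j ∈ s, ((1:ℂ) - v j)) - ∏ j ∈ s, ((0:ℂ) - v j)‖
      ≤ ((t : ℝ)⁻¹) ^ m * ((m : ℝ) * 1 * ((t : ℝ) * ((m : ℝ) + 1)) ^ (m - 1)) := by
        apply mul_le_mul hinv hnum (norm_nonneg _) (by positivity)
    _ = (m : ℝ) * ((m : ℝ) + 1) ^ (m - 1) * (((t : ℝ)⁻¹) ^ m * (t : ℝ) ^ (m - 1)) := by
        rw [mul_pow]; ring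
    _ = (m : ℝ) * ((m : ℝ) + 1) ^ (m - 1) / t := by
        congr 1
        obtain ⟨n, rfl⟩ : ∃ n, m = n + 1 := ⟨m - 1, (Nat.succ_pred_eq_of_pos hm).symm⟩
        rw [Nat.add_sub_cancel, pow_succ, inv_pow]
        field_simp
    _ ≤ (m : ℝ) * ((m : ℝ) + 1) ^ m / t := by
        gcongr
        · have : (0:ℝ) ≤ (m:ℝ) := Nat.cast_nonneg m
          linarith
        · exact Nat.sub_le m 1

end PolyGrowthAux
end Part3

section Part3b
open Finset Function Polynomial
namespace PolyGrowthAux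

/-- The key Markov-type estimate: if `p : ℕ → ℂ` is a polynomial sequence of degree at most `m`
and `‖p (t * j)‖ ≤ B` for `j = 0, ..., m`, then `‖p 1 - p 0‖ ≤ ((m+1)^(m+2)) * B / t`. -/
lemma markov {m t : ℕ} (ht : 1 ≤ t) {p : ℕ → ℂ} (hp : (fwdDiff 1)^[m + 1] p = 0) {B : ℝ}
    (hB : ∀ j, j ≤ m → ‖p (t * j)‖ ≤ B) :
    ‖p 1 - p 0‖ ≤ ((m : ℝ) + 1) ^ (m + 2) * B / t := by
  have ht0 : (0 : ℝ) < t := by exact_mod_cast ht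
  have hB0 : 0 ≤ B := le_trans (norm_nonneg (p 0))
    (by have := hB 0 (Nat.zero_le m); rwa [Nat.mul_zero] at this)
  obtain ⟨P, hdeg, hPe⟩ := exists_poly hp
  set v : ℕ → ℂ := fun j => ((t * j : ℕ) : ℂ) with hv
  have hinj : Set.InjOn v (range (m + 1)) := by
    intro a _ b _ hab
    have h1 : t * a = t * b := Nat.cast_inj.mp hab
    exact Nat.eq_of_mul_eq_mul_left (by omega) h1
  have hdeg' : P.degree < (range (m + 1)).card := by rw [card_range]; exact hdeg
  have hP := Lagrange.eq_interpolate hinj hdeg'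
  have hPv : ∀ i : ℕ, P.eval (v i) = p (t * i) := fun i => (hPe (t * i)).symm
  have heval : ∀ z : ℂ, P.eval z = ∑ i ∈ range (m + 1),
      P.eval (v i) * eval z (Lagrange.basis (range (m + 1)) v i) := by
    intro z
    conv_lhs => rw [hP]
    rw [Lagrange.interpolate_apply, eval_finset_sum]
    exact Finset.sum_congr rfl fun i _ => by rw [eval_mul, eval_C]
  have hkey : p 1 - p 0 = ∑ i ∈ range (m + 1), p (t * i) *
      (eval 1 (Lagrange.basis (range (m + 1)) v i)
        - eval 0 (Lagrange.basis (range (m + 1)) v i)) := by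
    have h1 : p 1 = P.eval 1 := by have := hPe 1; simpa using this
    have h0 : p 0 = P.eval 0 := by have := hPe 0; simpa using this
    rw [h1, h0, heval 1, heval 0, ← Finset.sum_sub_distrib]
    refine Finset.sum_congr rfl fun i _ => ?_
    rw [hPv i]
    ring
  rw [hkey]
  have hbd : ∀ i ∈ range (m + 1), ‖p (t * i) *
      (eval 1 (Lagrange.basis (range (m + 1)) v i)
        - eval 0 (Lagrange.basis (range (m + 1)) v i))‖
      ≤ B * ((m : ℝ) * ((m : ℝ) + 1) ^ m / t) := by
    intro i hi
    rw [norm_mul]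
    refine mul_le_mul (hB i (by simpa [Nat.lt_succ_iff] using hi))
      (basis_diff_bound ht hi) (norm_nonneg _) hB0
  calc ‖∑ i ∈ range (m + 1), p (t * i) *
      (eval 1 (Lagrange.basis (range (m + 1)) v i)
        - eval 0 (Lagrange.basis (range (m + 1)) v i))‖
      ≤ ∑ i ∈ range (m + 1), ‖p (t * i) *
        (eval 1 (Lagrange.basis (range (m + 1)) v i)
          - eval 0 (Lagrange.basis (range (m + 1)) v i))‖ := norm_sum_le _ _
    _ ≤ ∑ _i ∈ range (m + 1), B * ((m : ℝ) * ((m : ℝ) + 1) ^ m / t) :=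
        Finset.sum_le_sum hbd
    _ = ((m : ℝ) + 1) * (B * ((m : ℝ) * ((m : ℝ) + 1) ^ m / t)) := by
        rw [Finset.sum_const, card_range]; push_cast; ring
    _ = ((m : ℝ) + 1) * (m : ℝ) * ((m : ℝ) + 1) ^ m * B / t := by ring
    _ ≤ ((m : ℝ) + 1) * ((m : ℝ) + 1) * ((m : ℝ) + 1) ^ m * B / t := by
        gcongr
        · have : (0:ℝ) ≤ (m:ℝ) := Nat.cast_nonneg m; linarith
    _ = ((m : ℝ) + 1) ^ (m + 2) * B / t := by
        rw [pow_succ, pow_succ]; ring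


end PolyGrowthAux
end Part3b
section Part4

namespace PolyGrowthAux

variable {G : Type*} [Group G]

lemma lderiv_zero (u : G) : lderiv u (0 : G → ℂ) = 0 := funext fun g => by simp [lderiv]

lemma isPolyOfDeg_succ {n : ℕ} {f : G → ℂ} (h : IsPolyOfDeg n f) : IsPolyOfDeg (n + 1) f := by
  intro us hus
  match us, hus with
  | u :: rest, hus =>
    have hr : rest.length = n + 1 := by simpa using hus
    show lderiv u (rest.foldr lderiv f) = 0
    rw [h rest hr, lderiv_zero]

lemma isPolyOfDeg_lderiv {n : ℕ} {f : G → ℂ} (h : IsPolyOfDeg (n + 1) f) (v : G) :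
    IsPolyOfDeg n (lderiv v f) := by
  intro us hus
  have h2 := h (us ++ [v]) (by simp [hus])
  rw [List.foldr_append] at h2
  exact h2

lemma foldr_replicate (j : ℕ) (v : G) (f : G → ℂ) :
    (List.replicate j v).foldr lderiv f = (lderiv v)^[j] f := by
  induction j with
  | zero => rfl
  | succ j ih =>
    rw [List.replicate_succ, List.foldr_cons, ih]
    exact (Function.iterate_succ_apply' (lderiv v) j f).symm

lemma fwdDiff_pow_mul (v x : G) (f : G → ℂ) (j : ℕ) :
    ∀ n : ℕ, (fwdDiff 1)^[j] (fun n : ℕ => f (v ^ n * x)) n = ((lderiv v)^[j] f) (v ^ n * x) := by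
  induction j generalizing f with
  | zero => intro n; rfl
  | succ j ih =>
    intro n
    rw [Function.iterate_succ_apply]
    have h1 : fwdDiff 1 (fun n : ℕ => f (v ^ n * x)) = fun n : ℕ => (lderiv v f) (v ^ n * x) := by
      funext n
      show f (v ^ (n + 1) * x) - f (v ^ n * x) = _
      rw [lderiv, pow_succ' v n, mul_assoc]
    rw [h1, ih (lderiv v f) n, ← Function.iterate_succ_apply]

lemma central {m : ℕ} {f : G → ℂ} (hf : IsPolyOfDeg m f) (v x : G) {t : ℕ} (ht : 1 ≤ t)
    {B : ℝ} (hB : ∀ j, j ≤ m → ‖f (v ^ (t * j) * x)‖ ≤ B) :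
    ‖lderiv v f x‖ ≤ ((m : ℝ) + 1) ^ (m + 2) * B / t := by
  have hdiff : (fwdDiff 1)^[m + 1] (fun n : ℕ => f (v ^ n * x)) = 0 := by
    funext n
    rw [fwdDiff_pow_mul v x f (m + 1) n, ← foldr_replicate,
      hf _ List.length_replicate]
    rfl
  have h10 : lderiv v f x = (fun n : ℕ => f (v ^ n * x)) 1 - (fun n : ℕ => f (v ^ n * x)) 0 := by
    simp [lderiv]
  rw [h10]
  exact markov ht hdiff hB

section Wlen

variable {S : Finset G}

lemma exists_word (hsym : ∀ s ∈ S, s⁻¹ ∈ S) (hgen : Subgroup.closure (S : Set G) = ⊤) (x : G) :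
    ∃ l : List G, (∀ s ∈ l, s ∈ (S : Set G)) ∧ l.prod = x := by
  have hx : x ∈ Subgroup.closure (S : Set G) := by rw [hgen]; trivial
  have hx' : x ∈ Submonoid.closure ((S : Set G) ∪ (S : Set G)⁻¹) := by
    rw [← Subgroup.closure_toSubmonoid]; exact hx
  obtain ⟨l, hl, hprod⟩ := Submonoid.exists_list_of_mem_closure hx'
  refine ⟨l, fun s hs => ?_, hprod⟩
  rcases hl s hs with h | h
  · exact h
  · have h2 : s⁻¹ ∈ S := by simpa using h
    have := hsym _ h2
    simpa using this

lemma wlen_le_length (x : G) (l : List G) (hl : ∀ s ∈ l, s ∈ (S : Set G)) (hp : l.prod = x) :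
    wlen (S : Set G) x ≤ l.length := Nat.sInf_le ⟨l, rfl, hl, hp⟩

lemma exists_min_word (hsym : ∀ s ∈ S, s⁻¹ ∈ S) (hgen : Subgroup.closure (S : Set G) = ⊤)
    (x : G) : ∃ l : List G, l.length = wlen (S : Set G) x ∧ (∀ s ∈ l, s ∈ (S : Set G)) ∧
      l.prod = x := by
  obtain ⟨l, hl, hp⟩ := exists_word hsym hgen x
  exact Nat.sInf_mem (⟨l.length, l, rfl, hl, hp⟩ :
    {n : ℕ | ∃ l : List G, l.length = n ∧ (∀ s ∈ l, s ∈ (S : Set G)) ∧ l.prod = x}.Nonempty)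

lemma wlen_mul (hsym : ∀ s ∈ S, s⁻¹ ∈ S) (hgen : Subgroup.closure (S : Set G) = ⊤) (x y : G) :
    wlen (S : Set G) (x * y) ≤ wlen (S : Set G) x + wlen (S : Set G) y := by
  obtain ⟨lx, hlx, hsx, hpx⟩ := exists_min_word hsym hgen x
  obtain ⟨ly, hly, hsy, hpy⟩ := exists_min_word hsym hgen y
  have h := wlen_le_length (S := S) (x * y) (lx ++ ly)
    (fun s hs => by rcases List.mem_append.mp hs with h | h; exacts [hsx s h, hsy s h])
    (by rw [List.prod_append, hpx, hpy])
  simpa [List.length_append, hlx, hly] using h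

lemma wlen_pow (hsym : ∀ s ∈ S, s⁻¹ ∈ S) (hgen : Subgroup.closure (S : Set G) = ⊤)
    (v : G) (n : ℕ) : wlen (S : Set G) (v ^ n) ≤ n * wlen (S : Set G) v := by
  induction n with
  | zero =>
    have h := wlen_le_length (S := S) (v ^ 0) [] (by simp) (by simp)
    simpa using h
  | succ n ih =>
    rw [pow_succ]
    calc wlen (S : Set G) (v ^ n * v) ≤ wlen (S : Set G) (v ^ n) + wlen (S : Set G) v :=
          wlen_mul hsym hgen _ _
      _ ≤ n * wlen (S : Set G) v + wlen (S : Set G) v := by omega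
      _ = (n + 1) * wlen (S : Set G) v := by ring

end Wlen

end PolyGrowthAux
end Part4
section Part5
namespace PolyGrowthAux

variable {G : Type*} [Group G]

theorem aux (S : Finset G) (hsym : ∀ s ∈ S, s⁻¹ ∈ S)
    (hgen : Subgroup.closure (S : Set G) = ⊤) (m : ℕ) :
    ∀ k : ℕ, ∀ f : G → ℂ, IsPolyOfDeg m f →
    (∀ ε : ℝ, 0 < ε → ∃ R : ℕ, ∀ r : ℕ, R ≤ r → ∀ x : G, wlen (S : Set G) x ≤ r →
      ‖f x‖ ≤ ε * (r : ℝ) ^ (k + 1)) → IsPolyOfDeg k f := by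
  intro k
  induction k with
  | zero =>
    intro f hf hgrowth
    intro us hus
    match us, hus with
    | [v], _ =>
      show lderiv v f = 0
      funext x
      rw [Pi.zero_apply]
      have key : ∀ δ : ℝ, 0 < δ → ‖lderiv v f x‖ ≤ δ := by
        intro δ hδ
        set Cm : ℝ := ((m : ℝ) + 1) ^ (m + 2) with hCm
        have hCm0 : 0 < Cm := by positivity
        set A : ℕ := m * wlen (S : Set G) v + wlen (S : Set G) x + 1 with hA
        have hA1 : 1 ≤ A := by omega
        have hA0 : (0 : ℝ) < A := by exact_mod_cast hA1
        set ε : ℝ := δ / (Cm * A + 1) with hε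
        have hε0 : 0 < ε := by positivity
        obtain ⟨R, hR⟩ := hgrowth ε hε0
        set t : ℕ := max R 1 with htdef
        have ht : 1 ≤ t := le_max_right _ _
        have ht0 : (0 : ℝ) < t := by exact_mod_cast ht
        have hB : ∀ j, j ≤ m → ‖f (v ^ (t * j) * x)‖ ≤ ε * ((t * A : ℕ) : ℝ) ^ (0 + 1) := by
          intro j hj
          have hw : wlen (S : Set G) (v ^ (t * j) * x) ≤ t * A := by
            calc wlen (S : Set G) (v ^ (t * j) * x)
                ≤ wlen (S : Set G) (v ^ (t * j)) + wlen (S : Set G) x :=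
                  wlen_mul hsym hgen _ _
              _ ≤ t * j * wlen (S : Set G) v + wlen (S : Set G) x := by
                  have := wlen_pow hsym hgen v (t * j); omega
              _ ≤ t * A := by
                  have h1 : t * j * wlen (S : Set G) v ≤ t * (m * wlen (S : Set G) v) := by
                    rw [mul_assoc]
                    exact Nat.mul_le_mul_left t (Nat.mul_le_mul_right _ hj)
                  have h2 : wlen (S : Set G) x + 1 ≤ t * (wlen (S : Set G) x + 1) :=
                    Nat.le_mul_of_pos_left _ (by omega)
                  have h3 : t * A = t * (m * wlen (S : Set G) v)
                      + t * (wlen (S : Set G) x + 1) := by rw [hA]; ring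
                  omega
          exact hR (t * A) (le_trans (le_max_left R 1) (Nat.le_mul_of_pos_right t (by omega))) _ hw
        have hcen := central hf v x ht hB
        have harith : Cm * (ε * ((t * A : ℕ) : ℝ) ^ (0 + 1)) / t = ε * (Cm * A) := by
          push_cast
          field_simp
        rw [harith] at hcen
        calc ‖lderiv v f x‖ ≤ ε * (Cm * A) := hcen
          _ = δ * (Cm * A) / (Cm * A + 1) := by rw [hε]; ring
          _ ≤ δ := by
              rw [div_le_iff₀ (by positivity)]
              nlinarith [mul_pos hCm0 hA0]
      by_contra hne
      have h0 : 0 < ‖lderiv v f x‖ := norm_pos_iff.mpr hne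
      have := key (‖lderiv v f x‖ / 2) (by positivity)
      linarith
  | succ k ih =>
    intro f hf hgrowth
    intro us hus
    rcases List.eq_nil_or_concat us with rfl | ⟨us', v, rfl⟩
    · simp at hus
    · rw [List.concat_eq_append, List.foldr_append]
      have hus' : us'.length = k + 1 := by
        have := hus; simp [List.concat_eq_append] at this; omega
      have hfd : IsPolyOfDeg m (lderiv v f) := isPolyOfDeg_lderiv (isPolyOfDeg_succ hf) v
      refine ih (lderiv v f) hfd ?_ us' hus'
      -- growth estimate for the derivative
      intro ε hε
      set Cm : ℝ := ((m : ℝ) + 1) ^ (m + 2) with hCm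
      have hCm0 : 0 < Cm := by positivity
      set B₀ : ℕ := m * wlen (S : Set G) v + 1 with hB₀
      have hB₀1 : 1 ≤ B₀ := by omega
      have hB₀0 : (0 : ℝ) < B₀ := by exact_mod_cast hB₀1
      set ε' : ℝ := ε / (Cm * (B₀ : ℝ) ^ (k + 1 + 1) + 1) with hε'
      have hε'0 : 0 < ε' := by positivity
      obtain ⟨R, hR⟩ := hgrowth ε' hε'0
      refine ⟨max R 1, fun r hr x hx => ?_⟩
      have hr1 : 1 ≤ r := le_trans (le_max_right R 1) hr
      have hrR : R ≤ r := le_trans (le_max_left R 1) hr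
      have hr0 : (0 : ℝ) < r := by exact_mod_cast hr1
      have hB : ∀ j, j ≤ m →
          ‖f (v ^ (r * j) * x)‖ ≤ ε' * ((r * B₀ : ℕ) : ℝ) ^ (k + 1 + 1) := by
        intro j hj
        have hw : wlen (S : Set G) (v ^ (r * j) * x) ≤ r * B₀ := by
          calc wlen (S : Set G) (v ^ (r * j) * x)
              ≤ wlen (S : Set G) (v ^ (r * j)) + wlen (S : Set G) x :=
                wlen_mul hsym hgen _ _
            _ ≤ r * j * wlen (S : Set G) v + wlen (S : Set G) x := by
                have := wlen_pow hsym hgen v (r * j); omega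
            _ ≤ r * B₀ := by
                have h1 : r * j * wlen (S : Set G) v ≤ r * (m * wlen (S : Set G) v) := by
                  rw [mul_assoc]
                  exact Nat.mul_le_mul_left r (Nat.mul_le_mul_right _ hj)
                have h3 : r * B₀ = r * (m * wlen (S : Set G) v) + r * 1 := by rw [hB₀]; ring
                omega
        exact hR (r * B₀) (le_trans hrR (Nat.le_mul_of_pos_right r (by omega))) _ hw
      have hcen := central hf v x hr1 hB
      have harith : Cm * (ε' * ((r * B₀ : ℕ) : ℝ) ^ (k + 1 + 1)) / r
          = (Cm * (B₀ : ℝ) ^ (k + 1 + 1) * ε') * (r : ℝ) ^ (k + 1) := by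
        push_cast
        rw [mul_pow]
        field_simp
        ring
      rw [harith] at hcen
      refine le_trans hcen ?_
      have hfac : Cm * (B₀ : ℝ) ^ (k + 1 + 1) * ε' ≤ ε := by
        have hD0 : 0 < Cm * (B₀ : ℝ) ^ (k + 1 + 1) := by positivity
        rw [hε', ← mul_div_assoc, div_le_iff₀ (by positivity)]
        nlinarith
      exact mul_le_mul_of_nonneg_right hfac (by positivity)

end PolyGrowthAux
end Part5

/-- If `f` is a polynomial on a finitely generated group and
`max_{|x| ≤ r} |f x| = o(r^{k+1})` as `r → ∞`, then `f` has degree at most `k`. -/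
theorem poly_of_small_growth {G : Type*} [Group G] (S : Finset G)
    (hsym : ∀ s ∈ S, s⁻¹ ∈ S) (hgen : Subgroup.closure (S : Set G) = ⊤)
    (k m : ℕ) (f : G → ℂ) (hf : IsPolyOfDeg m f)
    (hgrowth : ∀ ε : ℝ, 0 < ε → ∃ R : ℕ, ∀ r : ℕ, R ≤ r →
      ∀ x : G, wlen (S : Set G) x ≤ r → ‖f x‖ ≤ ε * (r : ℝ) ^ (k + 1)) :
    IsPolyOfDeg k f :=
  PolyGrowthAux.aux S hsym hgen m k f hf hgrowth
end
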